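/- Let f be a continuous function nonzero on the spectrum of a symmetric tridiagonal matrix T with simple spectrum, and define the QR step F(T) = Q(f(T))ᵀ T Q(f(T)). In π-bidiagonal coordinates F acts by βᵢ^π ↦ |f(λ_{π(i+1)})/f(λ_{π(i)})| · βᵢ^π. Consequently, if T ∈ U_Λ^π and |f(λ_{π(1)})| > ... > |f(λ_{π(n)})|, then the iterates F^k(T) converge to Λ^π as k → ∞. -/

import Mathlib

open Matrix

/-- `L` is lower triangular with unit diagonal. -/
def IsUnipLower {n : ℕ} (L : Matrix (Fin n) (Fin n) ℝ) : Prop :=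
  (∀ i j : Fin n, i < j → L i j = 0) ∧ ∀ i : Fin n, L i i = 1

/-- `U` is upper triangular with strictly positive diagonal. -/
def IsUpperTriPos {n : ℕ} (U : Matrix (Fin n) (Fin n) ℝ) : Prop :=
  (∀ i j : Fin n, j < i → U i j = 0) ∧ ∀ i : Fin n, 0 < U i i

/-- The leading principal minor of order `k` of `M`. -/
def leadingMinor {n : ℕ} (M : Matrix (Fin n) (Fin n) ℝ) (k : ℕ) (h : k ≤ n) : ℝ :=
  (Matrix.of fun i j : Fin k => M (Fin.castLE h i) (Fin.castLE h j)).det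

/-- `M` is LU-positive: all leading principal minors are strictly positive. -/
def LUPositive {n : ℕ} (M : Matrix (Fin n) (Fin n) ℝ) : Prop :=
  ∀ k (h : k ≤ n), 0 < leadingMinor M k h

/-- `Q` is orthogonal. -/
def IsOrth {n : ℕ} (Q : Matrix (Fin n) (Fin n) ℝ) : Prop := Qᵀ * Q = 1

/-- `E` is a sign diagonal `diag(±1, …, ±1)`. -/
def IsSignDiag {n : ℕ} (E : Matrix (Fin n) (Fin n) ℝ) : Prop :=
  (∀ i j : Fin n, i ≠ j → E i j = 0) ∧ ∀ i : Fin n, E i i = 1 ∨ E i i = -1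

/-- `M` is tridiagonal. -/
def IsTridiag {n : ℕ} (M : Matrix (Fin n) (Fin n) ℝ) : Prop :=
  ∀ i j : Fin n, ((i : ℕ) + 1 < (j : ℕ) ∨ (j : ℕ) + 1 < (i : ℕ)) → M i j = 0

/-- `π`-normalized chart data for `T`: an LU-positive orthogonal `Q` diagonalizing `T`,
its LU factorization `Q = L * U`, and the associated bidiagonal matrix `B = L⁻¹ Λ L`. -/
def ChartData {n : ℕ} (lamπ : Fin n → ℝ) (T Q L U B : Matrix (Fin n) (Fin n) ℝ) : Prop :=
  IsOrth Q ∧ LUPositive Q ∧ T = Qᵀ * Matrix.diagonal lamπ * Q ∧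
    Q = L * U ∧ IsUnipLower L ∧ IsUpperTriPos U ∧
    L * B = Matrix.diagonal lamπ * L ∧
    (∀ i j : Fin n, (i : ℕ) ≠ (j : ℕ) → (i : ℕ) ≠ (j : ℕ) + 1 → B i j = 0)

/-!
Write `T = Qᵀ Λ Q` with `Q = L U` and `f(T) = Q_f R_f`, and let `D = diag (f ∘ λ^π)`. Then
`Q Q_f = D Q R_f⁻¹`, so after correcting signs by `E = sign D` the new diagonalizing factor is
`E Q Q_f = |D| Q R_f⁻¹ = (|D| L |D|⁻¹) (|D| U R_f⁻¹)`: one QR step conjugates the chart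
coordinates `L` and `B = L⁻¹ Λ L` by `|D|`, which multiplies `βᵢ` by
`|f(λ_{π(i+1)}) / f(λ_{π(i)})|`. After `k` steps the unipotent factor is `|D|ᵏ L |D|⁻ᵏ`, which
tends to `1` when `|f ∘ λ^π|` is strictly decreasing; by compactness of the orthogonal group the
orthogonal factor then tends to `1` as well, hence `F^k(T) → Λ^π`.
-/

open Filter Topology Matrix

section BlockTriangular

variable {m α R : Type*} [LinearOrder α] [Fintype m] [NonUnitalNonAssocSemiring R]

theorem Matrix.BlockTriangular.mul_apply_self {b : m → α} (hb : Function.Injective b)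
    {M N : Matrix m m R} (hM : M.BlockTriangular b) (hN : N.BlockTriangular b) (i : m) :
    (M * N) i i = M i i * N i i := by
  refine Finset.sum_eq_single i (fun k _ hki => ?_) (by simp)
  rcases lt_or_gt_of_ne (hb.ne hki) with h | h
  · exact mul_eq_zero_of_left (hM h) _
  · exact mul_eq_zero_of_right _ (hN h)

end BlockTriangular

theorem Matrix.diagonal_mul_mul_diagonal_inv_apply {ι K : Type*} [Fintype ι] [DecidableEq ι]
    [Field K] (δ : ι → K) (M : Matrix ι ι K) (i j : ι) :
    (diagonal δ * M * diagonal fun i => (δ i)⁻¹) i j = δ i / δ j * M i j := by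
  simp only [mul_diagonal, diagonal_mul]
  ring

theorem Matrix.commute_diagonal_of_injective {ι R : Type*} [Fintype ι] [DecidableEq ι]
    [CommRing R] [NoZeroDivisors R] {l : ι → R} (hl : Function.Injective l)
    {M : Matrix ι ι R} (h : Commute M (diagonal l)) (d : ι → R) : Commute M (diagonal d) := by
  have hM : M = diagonal M.diag := by
    ext i j
    rcases eq_or_ne i j with rfl | hij
    · simp
    have hij' := congr_fun₂ h.eq i j
    simp only [mul_diagonal, diagonal_mul] at hij'
    have : (l j - l i) * M i j = 0 := by linear_combination hij'
    rw [diagonal_apply_ne _ hij]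
    exact (mul_eq_zero.1 this).resolve_left (sub_ne_zero.2 (hl.ne hij.symm))
  rw [hM]
  exact commute_diagonal _ _

variable {n : ℕ}

section Orthogonal

variable {A B S S' : Matrix (Fin n) (Fin n) ℝ}

theorem IsOrth.mul_transpose (hA : IsOrth A) : A * Aᵀ = 1 :=
  mul_eq_one_comm.1 hA

theorem IsOrth.mul (hA : IsOrth A) (hB : IsOrth B) : IsOrth (A * B) := by
  unfold IsOrth at *
  rw [transpose_mul, Matrix.mul_assoc, ← Matrix.mul_assoc Aᵀ, hA, Matrix.one_mul, hB]

theorem isOrth_diagonal {d : Fin n → ℝ} (hd : ∀ i, d i * d i = 1) : IsOrth (diagonal d) := by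
  unfold IsOrth
  rw [diagonal_transpose, diagonal_mul_diagonal, ← diagonal_one]
  exact congrArg diagonal (funext hd)

theorem isClosed_setOf_isOrth : IsClosed {A : Matrix (Fin n) (Fin n) ℝ | IsOrth A} :=
  isClosed_eq (continuous_id.matrix_transpose.matrix_mul continuous_id) continuous_const

theorem IsOrth.abs_apply_le_one (hA : IsOrth A) (i j : Fin n) : |A i j| ≤ 1 :=
  entry_norm_bound_of_unitary (mem_unitaryGroup_iff'.2 hA) i j

theorem Matrix.transpose_mul_mul_conj {ι R : Type*} [Fintype ι] [CommSemiring R]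
    (X A B : Matrix ι ι R) :
    (A * B)ᵀ * X * (A * B) = Bᵀ * (Aᵀ * X * A) * B := by
  simp only [transpose_mul, Matrix.mul_assoc]

/-- Orthogonal diagonalizations of a matrix with simple spectrum differ by a diagonal factor. -/
theorem IsOrth.conj_diagonal_eq {l : Fin n → ℝ} (hl : Function.Injective l) (hS : IsOrth S)
    (hS' : IsOrth S') (h : Sᵀ * diagonal l * S = S'ᵀ * diagonal l * S') (d : Fin n → ℝ) :
    Sᵀ * diagonal d * S = S'ᵀ * diagonal d * S' := by
  unfold IsOrth at hS hS'
  have hcomm : Commute (S * S'ᵀ) (diagonal l) := by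
    calc S * S'ᵀ * diagonal l = S * (S'ᵀ * diagonal l * S') * S'ᵀ := by
          simp only [Matrix.mul_assoc, mul_eq_one_comm.1 hS', Matrix.mul_one]
      _ = (S * Sᵀ) * diagonal l * (S * S'ᵀ) := by rw [← h]; simp only [Matrix.mul_assoc]
      _ = diagonal l * (S * S'ᵀ) := by rw [mul_eq_one_comm.1 hS, Matrix.one_mul]
  calc Sᵀ * diagonal d * S = Sᵀ * (diagonal d * (S * S'ᵀ)) * S' := by
        simp only [Matrix.mul_assoc, hS', Matrix.mul_one]
    _ = S'ᵀ * diagonal d * S' := by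
        rw [← (commute_diagonal_of_injective hl hcomm d).eq]
        simp only [← Matrix.mul_assoc, hS, Matrix.one_mul]

end Orthogonal

section Triangular

variable {L U V : Matrix (Fin n) (Fin n) ℝ}

theorem IsUpperTriPos.isUpperTriangular (hU : IsUpperTriPos U) : U.IsUpperTriangular :=
  fun i j h => hU.1 i j h

theorem IsUnipLower.isLowerTriangular (hL : IsUnipLower L) : L.IsLowerTriangular :=
  fun i j h => hL.1 i j h

theorem IsUpperTriPos.mul (hU : IsUpperTriPos U) (hV : IsUpperTriPos V) :
    IsUpperTriPos (U * V) := by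
  refine ⟨fun i j h => (hU.isUpperTriangular.mul hV.isUpperTriangular) h, fun i => ?_⟩
  rw [hU.isUpperTriangular.mul_apply_self Function.injective_id hV.isUpperTriangular]
  exact mul_pos (hU.2 i) (hV.2 i)

theorem IsUpperTriPos.diagonal_mul {δ : Fin n → ℝ} (hδ : ∀ i, 0 < δ i)
    (hU : IsUpperTriPos U) : IsUpperTriPos (diagonal δ * U) :=
  ⟨fun i j h => by rw [Matrix.diagonal_mul, hU.1 i j h, mul_zero],
    fun i => by rw [Matrix.diagonal_mul]; exact mul_pos (hδ i) (hU.2 i)⟩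

theorem IsUpperTriPos.isUnit_det (hU : IsUpperTriPos U) : IsUnit U.det := by
  rw [det_of_isUpperTriangular hU.isUpperTriangular]
  exact isUnit_iff_ne_zero.2 (Finset.prod_pos fun i _ => hU.2 i).ne'

theorem IsUpperTriPos.inv (hU : IsUpperTriPos U) : IsUpperTriPos U⁻¹ := by
  have := invertibleOfIsUnitDet U hU.isUnit_det
  have hinv : U⁻¹.BlockTriangular id := blockTriangular_inv_of_blockTriangular hU.isUpperTriangular
  refine ⟨fun i j h => hinv h, fun i => pos_of_mul_pos_right (b := U⁻¹ i i) ?_ (hU.2 i).le⟩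
  rw [← hU.isUpperTriangular.mul_apply_self Function.injective_id hinv,
    mul_nonsing_inv U hU.isUnit_det, one_apply_eq]
  exact one_pos

theorem IsUnipLower.diagonal_conj {δ : Fin n → ℝ} (hδ : ∀ i, δ i ≠ 0) (hL : IsUnipLower L) :
    IsUnipLower (diagonal δ * L * diagonal fun i => (δ i)⁻¹) := by
  refine ⟨fun i j h => ?_, fun i => ?_⟩ <;> rw [diagonal_mul_mul_diagonal_inv_apply]
  · rw [hL.1 i j h, mul_zero]
  · rw [hL.2 i, div_self (hδ i), one_mul]

theorem IsUnipLower.isUnit_det (hL : IsUnipLower L) : IsUnit L.det := by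
  rw [det_of_isLowerTriangular L hL.isLowerTriangular]
  simp [hL.2]

theorem Matrix.submatrix_castLE_mul_of_lower {R : Type*} [NonUnitalNonAssocSemiring R] {k : ℕ}
    (h : k ≤ n) {A B : Matrix (Fin n) (Fin n) R} (hA : A.IsLowerTriangular) :
    (A * B).submatrix (Fin.castLE h) (Fin.castLE h) =
      A.submatrix (Fin.castLE h) (Fin.castLE h) * B.submatrix (Fin.castLE h) (Fin.castLE h) := by
  ext i j
  simp only [submatrix_apply, mul_apply]
  symm
  rw [← Finset.sum_subset (Finset.subset_univ (Finset.univ.map (Fin.castLEEmb h))), Finset.sum_map]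
  · rfl
  intro m _ hm
  have him : Fin.castLE h i < m := by
    by_contra! hmi
    exact hm (Finset.mem_map.2 ⟨⟨m, (Fin.le_def.1 hmi).trans_lt i.isLt⟩, Finset.mem_univ _, rfl⟩)
  exact mul_eq_zero_of_left (hA him) _

theorem luPositive_mul (hL : IsUnipLower L) (hU : IsUpperTriPos U) : LUPositive (L * U) := by
  intro k h
  have hL' := hL.isLowerTriangular.submatrix (f := Fin.castLE h)
  have hU' := hU.isUpperTriangular.submatrix (f := Fin.castLE h)
  rw [leadingMinor, ← submatrix, submatrix_castLE_mul_of_lower h hL.isLowerTriangular, det_mul,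
    det_of_isLowerTriangular _ hL', det_of_isUpperTriangular hU']
  simp only [submatrix_apply, hL.2, Finset.prod_const_one, one_mul]
  exact Finset.prod_pos fun i _ => hU.2 _

end Triangular

section QRStep

variable {lamπ fπ : Fin n → ℝ}

theorem ChartData.qrStep (hf : ∀ i, fπ i ≠ 0) {T Q L U B Qf Rf : Matrix (Fin n) (Fin n) ℝ}
    (hCD : ChartData lamπ T Q L U B) (hQf : IsOrth Qf) (hRf : IsUpperTriPos Rf)
    (hQR : Qᵀ * diagonal fπ * Q = Qf * Rf) :
    ChartData lamπ (Qfᵀ * T * Qf) (diagonal (fun i => |fπ i| / fπ i) * Q * Qf)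
      (diagonal (fun i => |fπ i|) * L * diagonal fun i => |fπ i|⁻¹)
      (diagonal (fun i => |fπ i|) * U * Rf⁻¹)
      (diagonal (fun i => |fπ i|) * B * diagonal fun i => |fπ i|⁻¹) := by
  obtain ⟨hQ, -, hT, hQLU, hL, hU, hLB, hB⟩ := hCD
  have hδ : ∀ i, 0 < |fπ i| := fun i => abs_pos.2 (hf i)
  set Δ := diagonal fun i => |fπ i|
  set Δinv := diagonal fun i => |fπ i|⁻¹
  set E := diagonal fun i => |fπ i| / fπ i
  have hΔinv : Δinv * Δ = 1 := by
    rw [diagonal_mul_diagonal, ← diagonal_one]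
    exact congrArg diagonal (funext fun i => inv_mul_cancel₀ (hδ i).ne')
  have hEf : E * diagonal fπ = Δ := by
    rw [diagonal_mul_diagonal]
    exact congrArg diagonal (funext fun i => div_mul_cancel₀ _ (hf i))
  have hE : IsOrth E := isOrth_diagonal fun i => by
    rw [div_mul_div_comm, abs_mul_abs_self, div_self (mul_ne_zero (hf i) (hf i))]
  have hEΛ : Eᵀ * diagonal lamπ * E = diagonal lamπ := by
    have hcomm : Eᵀ * diagonal lamπ = diagonal lamπ * Eᵀ := by
      rw [diagonal_transpose]; exact commute_diagonal _ _
    rw [hcomm, Matrix.mul_assoc, hE, Matrix.mul_one]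
  have hQ' : E * Q * Qf = Δ * Q * Rf⁻¹ := by
    have hQf' : Qf = Qᵀ * diagonal fπ * Q * Rf⁻¹ := by
      rw [hQR, Matrix.mul_assoc, mul_nonsing_inv _ hRf.isUnit_det, Matrix.mul_one]
    rw [hQf', ← hEf]
    simp only [Matrix.mul_assoc, ← Matrix.mul_assoc Q Qᵀ, hQ.mul_transpose, Matrix.one_mul]
  have hLU : E * Q * Qf = (Δ * L * Δinv) * (Δ * U * Rf⁻¹) := by
    rw [hQ', hQLU]
    simp only [Matrix.mul_assoc, ← Matrix.mul_assoc Δinv, hΔinv, Matrix.one_mul]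
  have hL' : IsUnipLower (Δ * L * Δinv) := hL.diagonal_conj fun i => (hδ i).ne'
  have hU' : IsUpperTriPos (Δ * U * Rf⁻¹) := (hU.diagonal_mul hδ).mul hRf.inv
  refine ⟨(hE.mul hQ).mul hQf, hLU ▸ luPositive_mul hL' hU', ?_, hLU, hL', hU', ?_, ?_⟩
  · rw [hT, transpose_mul_mul_conj, transpose_mul_mul_conj, hEΛ]
  · calc (Δ * L * Δinv) * (Δ * B * Δinv) = Δ * (L * B) * Δinv := by
          simp only [Matrix.mul_assoc, ← Matrix.mul_assoc Δinv, hΔinv, Matrix.one_mul]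
      _ = diagonal lamπ * (Δ * L * Δinv) := by
          rw [hLB, ← Matrix.mul_assoc, (commute_diagonal _ _).eq]
          simp only [Matrix.mul_assoc]
          rfl
  · intro i j h₁ h₂
    rw [diagonal_mul_mul_diagonal_inv_apply, hB i j h₁ h₂, mul_zero]

end QRStep

section Convergence

variable {lamπ fπ : Fin n → ℝ}

theorem exists_chartData_of_qrIterates (hl : Function.Injective lamπ) (hf : ∀ i, fπ i ≠ 0)
    {T : ℕ → Matrix (Fin n) (Fin n) ℝ} {Q L U B : Matrix (Fin n) (Fin n) ℝ}
    (h0 : ChartData lamπ (T 0) Q L U B)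
    (hstep : ∀ k : ℕ, ∃ S Qf Rf : Matrix (Fin n) (Fin n) ℝ,
      IsOrth S ∧ T k = Sᵀ * diagonal lamπ * S ∧ IsOrth Qf ∧ IsUpperTriPos Rf ∧
      Sᵀ * diagonal fπ * S = Qf * Rf ∧ T (k + 1) = Qfᵀ * T k * Qf) (k : ℕ) :
    ∃ Qk Lk Uk Bk : Matrix (Fin n) (Fin n) ℝ, ChartData lamπ (T k) Qk Lk Uk Bk ∧
      ∀ i j, Lk i j = (|fπ i| / |fπ j|) ^ k * L i j := by
  induction k with
  | zero => exact ⟨Q, L, U, B, h0, fun i j => by rw [pow_zero, one_mul]⟩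
  | succ k ih =>
    obtain ⟨Qk, Lk, Uk, Bk, hCD, hLk⟩ := ih
    obtain ⟨S, Qf, Rf, hS, hTS, hQf, hRf, hSQR, hT⟩ := hstep k
    have hQR : Qkᵀ * diagonal fπ * Qk = Qf * Rf := by
      rw [← hSQR]
      exact hCD.1.conj_diagonal_eq hl hS (hCD.2.2.1.symm.trans hTS) fπ
    rw [hT]
    refine ⟨_, _, _, _, hCD.qrStep hf hQf hRf hQR, fun i j => ?_⟩
    rw [diagonal_mul_mul_diagonal_inv_apply, hLk, pow_succ]
    ring

theorem IsUnipLower.tendsto_conj_pow {L : Matrix (Fin n) (Fin n) ℝ} (hL : IsUnipLower L)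
    {δ : Fin n → ℝ} (hδ : ∀ i, 0 < δ i) (hanti : StrictAnti δ)
    {Lk : ℕ → Matrix (Fin n) (Fin n) ℝ} (hLk : ∀ k i j, Lk k i j = (δ i / δ j) ^ k * L i j) :
    Tendsto Lk atTop (𝓝 1) := by
  refine tendsto_pi_nhds.2 fun i => tendsto_pi_nhds.2 fun j => ?_
  simp only [hLk]
  rcases lt_trichotomy i j with h | rfl | h
  · simp [hL.1 i j h, one_apply_ne h.ne]
  · simp [hL.2 i, div_self (hδ i).ne']
  · have hr := tendsto_pow_atTop_nhds_zero_of_lt_one (div_pos (hδ i) (hδ j)).le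
      ((div_lt_one (hδ j)).2 (hanti h))
    simpa [one_apply_ne h.ne'] using hr.mul_const (L i j)

theorem IsOrth.eq_one_of_isUpperTriangular {A : Matrix (Fin n) (Fin n) ℝ} (hA : IsOrth A)
    (hup : A.IsUpperTriangular) (hdiag : ∀ i, 0 ≤ A i i) : A = 1 := by
  have := invertibleOfLeftInverse A Aᵀ hA
  have hlow : Aᵀ.IsUpperTriangular :=
    inv_eq_left_inv hA ▸ blockTriangular_inv_of_blockTriangular hup
  have hsq : ∀ i, A i i * A i i = 1 := fun i => by
    have := congr_fun₂ hA i i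
    rwa [hlow.mul_apply_self Function.injective_id hup, transpose_apply, one_apply_eq] at this
  ext i j
  rcases lt_trichotomy i j with h | rfl | h
  · rw [one_apply_ne h.ne, ← transpose_apply A j i]
    exact hlow h
  · rw [one_apply_eq]
    exact (mul_self_eq_one_iff.1 (hsq i)).resolve_right fun h => by linarith [hdiag i]
  · rw [one_apply_ne h.ne', hup h]

/-- By compactness it suffices that every limit point of `C k` is `1`: it is orthogonal and, as a
limit of `R k = (L k)⁻¹ C k`, upper triangular with nonnegative diagonal. -/
theorem tendsto_one_of_isOrth_of_eq_mul {C L R : ℕ → Matrix (Fin n) (Fin n) ℝ}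
    (hC : ∀ k, IsOrth (C k)) (hL : ∀ k, IsUnipLower (L k)) (hR : ∀ k, IsUpperTriPos (R k))
    (hCLR : ∀ k, C k = L k * R k) (hLlim : Tendsto L atTop (𝓝 1)) :
    Tendsto C atTop (𝓝 1) := by
  have : FirstCountableTopology (Matrix (Fin n) (Fin n) ℝ) :=
    inferInstanceAs (FirstCountableTopology (Fin n → Fin n → ℝ))
  have hbox : IsCompact (X := Matrix (Fin n) (Fin n) ℝ)
      (Set.univ.pi fun _ => Set.univ.pi fun _ => Set.Icc (-1) 1) :=
    isCompact_univ_pi fun _ => isCompact_univ_pi fun _ => isCompact_Icc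
  refine tendsto_of_subseq_tendsto fun ns hns => ?_
  obtain ⟨a, -, φ, hφ, hlim⟩ := hbox.tendsto_subseq (x := fun m => C (ns m))
    fun m i _ j _ => abs_le.1 ((hC _).abs_apply_le_one i j)
  refine ⟨φ, ?_⟩
  have hLinv : Tendsto (fun m => (L (ns (φ m)))⁻¹) atTop (𝓝 1) := by
    have hcont := continuousAt_matrix_inv (1 : Matrix (Fin n) (Fin n) ℝ) (by
      rw [det_one, Ring.inverse_eq_inv']
      exact continuousAt_inv₀ one_ne_zero)
    have := hcont.tendsto.comp (hLlim.comp (hns.comp hφ.tendsto_atTop))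
    rwa [inv_one] at this
  have hRlim : Tendsto (fun m => R (ns (φ m))) atTop (𝓝 a) := by
    refine (one_mul a ▸ hLinv.mul hlim).congr fun m => ?_
    rw [Function.comp_apply, hCLR, ← Matrix.mul_assoc, nonsing_inv_mul _ (hL _).isUnit_det,
      Matrix.one_mul]
  have hentry : ∀ i j, Tendsto (fun m => R (ns (φ m)) i j) atTop (𝓝 (a i j)) :=
    fun i j => ((continuous_apply_apply i j).tendsto a).comp hRlim
  have ha : IsOrth a :=
    isClosed_setOf_isOrth.mem_of_tendsto hlim (Eventually.of_forall fun m => hC _)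
  have hup : a.IsUpperTriangular := fun i j h =>
    tendsto_nhds_unique (hentry i j) (tendsto_const_nhds.congr fun m => ((hR _).1 i j h).symm)
  have hdiag : ∀ i, 0 ≤ a i i := fun i =>
    ge_of_tendsto' (hentry i i) fun m => ((hR _).2 i).le
  rwa [ha.eq_one_of_isUpperTriangular hup hdiag] at hlim

theorem tendsto_diagonal_of_chartData {T Q L U B : ℕ → Matrix (Fin n) (Fin n) ℝ}
    (hCD : ∀ k, ChartData lamπ (T k) (Q k) (L k) (U k) (B k)) (hLlim : Tendsto L atTop (𝓝 1)) :
    Tendsto T atTop (𝓝 (diagonal lamπ)) := by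
  unfold ChartData at hCD
  choose hQ _ hT hQLU hL hU _ _ using hCD
  have hconj : Continuous fun M : Matrix (Fin n) (Fin n) ℝ => Mᵀ * diagonal lamπ * M :=
    (continuous_id.matrix_transpose.matrix_mul continuous_const).matrix_mul continuous_id
  have := (hconj.tendsto 1).comp (tendsto_one_of_isOrth_of_eq_mul hQ hL hU hQLU hLlim)
  rw [transpose_one, Matrix.one_mul, Matrix.mul_one] at this
  exact this.congr fun k => (hT k).symm

end Convergence

theorem stmt18_general (n : ℕ) (lam : Fin n → ℝ) (hlam : StrictMono lam)
    (π : Equiv.Perm (Fin n)) (f : ℝ → ℝ)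
    (hfnz : ∀ i, f (lam i) ≠ 0) :
    (∀ T Q L U B Qf Rf : Matrix (Fin n) (Fin n) ℝ,
      ChartData (fun i => lam (π i)) T Q L U B →
      IsOrth Qf → IsUpperTriPos Rf →
      Qᵀ * Matrix.diagonal (fun i => f (lam (π i))) * Q = Qf * Rf →
      ∃ Q' L' U' B' : Matrix (Fin n) (Fin n) ℝ,
        ChartData (fun i => lam (π i)) (Qfᵀ * T * Qf) Q' L' U' B' ∧
        ∀ i j : Fin n, (i : ℕ) = (j : ℕ) + 1 →
          B' i j = |f (lam (π i)) / f (lam (π j))| * B i j) ∧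
    ((∀ i j : Fin n, i < j → |f (lam (π j))| < |f (lam (π i))|) →
      ∀ T : ℕ → Matrix (Fin n) (Fin n) ℝ,
        (∃ Q L U B, ChartData (fun i => lam (π i)) (T 0) Q L U B) →
        (∀ k : ℕ, ∃ S Qf Rf : Matrix (Fin n) (Fin n) ℝ,
          IsOrth S ∧ T k = Sᵀ * Matrix.diagonal (fun i => lam (π i)) * S ∧
          IsOrth Qf ∧ IsUpperTriPos Rf ∧
          Sᵀ * Matrix.diagonal (fun i => f (lam (π i))) * S = Qf * Rf ∧
          T (k + 1) = Qfᵀ * T k * Qf) →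
        Filter.Tendsto T Filter.atTop
          (nhds (Matrix.diagonal (fun i => lam (π i))))) := by
  have hf : ∀ i, f (lam (π i)) ≠ 0 := fun i => hfnz (π i)
  have hl : Function.Injective fun i => lam (π i) := hlam.injective.comp π.injective
  refine ⟨fun T Q L U B Qf Rf hCD hQf hRf hQR =>
    ⟨_, _, _, _, hCD.qrStep hf hQf hRf hQR, fun i j _ => ?_⟩, fun hanti T h0 hstep => ?_⟩
  · rw [diagonal_mul_mul_diagonal_inv_apply, abs_div]
  · obtain ⟨Q, L, U, B, h0⟩ := h0
    choose Qk Lk Uk Bk hCD hLk using exists_chartData_of_qrIterates hl hf h0 hstep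
    exact tendsto_diagonal_of_chartData hCD
      (h0.2.2.2.2.1.tendsto_conj_pow (fun i => abs_pos.2 (hf i)) hanti hLk)

/-- The QR step induced by `f` acts on `π`-bidiagonal coordinates by
`βᵢ ↦ |f(λ_{π(i+1)})/f(λ_{π(i)})| βᵢ`; consequently, if
`|f(λ_{π(1)})| > … > |f(λ_{π(n)})|`, the QR iterates of any `T ∈ U_Λ^π` converge
to `Λ^π`.  (Here `f(T) = Qᵀ diag(f ∘ λ^π) Q` by functional calculus.) -/
theorem stmt18 (n : ℕ) (lam : Fin n → ℝ) (hlam : StrictMono lam)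
    (π : Equiv.Perm (Fin n)) (f : ℝ → ℝ) (hf : Continuous f)
    (hfnz : ∀ i, f (lam i) ≠ 0) :
    (∀ T Q L U B Qf Rf : Matrix (Fin n) (Fin n) ℝ,
      ChartData (fun i => lam (π i)) T Q L U B →
      IsOrth Qf → IsUpperTriPos Rf →
      Qᵀ * Matrix.diagonal (fun i => f (lam (π i))) * Q = Qf * Rf →
      ∃ Q' L' U' B' : Matrix (Fin n) (Fin n) ℝ,
        ChartData (fun i => lam (π i)) (Qfᵀ * T * Qf) Q' L' U' B' ∧
        ∀ i j : Fin n, (i : ℕ) = (j : ℕ) + 1 →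
          B' i j = |f (lam (π i)) / f (lam (π j))| * B i j) ∧
    ((∀ i j : Fin n, i < j → |f (lam (π j))| < |f (lam (π i))|) →
      ∀ T : ℕ → Matrix (Fin n) (Fin n) ℝ,
        (∃ Q L U B, ChartData (fun i => lam (π i)) (T 0) Q L U B) →
        (∀ k : ℕ, ∃ S Qf Rf : Matrix (Fin n) (Fin n) ℝ,
          IsOrth S ∧ T k = Sᵀ * Matrix.diagonal (fun i => lam (π i)) * S ∧
          IsOrth Qf ∧ IsUpperTriPos Rf ∧
          Sᵀ * Matrix.diagonal (fun i => f (lam (π i))) * S = Qf * Rf ∧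
          T (k + 1) = Qfᵀ * T k * Qf) →
        Filter.Tendsto T Filter.atTop
          (nhds (Matrix.diagonal (fun i => lam (π i))))) :=
  stmt18_general n lam hlam π f hfnz
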